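/- arXiv:math/0608779 — 2 statements merged into one kernel-verified Lean document; each statement's English description precedes it below -/
import Mathlib

section
/- Let Γ be a cyclically reduced A-graph, W_Γ its Whitehead hypergraph, v ∈ Ã, Y a v-cut of Ã, and φ the Whitehead automorphism of the second kind specified by (v, Y). Then |φ(Γ)| − |Γ| = cap_{W_Γ}(Y) − deg_{W_Γ}(v). -/
/-- The symmetrized alphabet `Ã = A ∪ Ā`, encoded as `A × Bool`. -/
abbrev Letter (A : Type) := A × Bool

/-- The formal inverse (bar) involution on letters. -/
def Letter.bar {A : Type} (a : Letter A) : Letter A := (a.1, !a.2)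

/-- An `A`-graph: a finite set of vertices and a finite set of edges labeled by `Ã`. -/
structure AGraph (V A : Type) where
  verts : Finset V
  edges : Finset (V × Letter A × V)

namespace AGraph

variable {V A : Type} [DecidableEq V] [DecidableEq A]

/-- A dual `A`-graph: edges join vertices of the graph, and `(x,a,y)` is an edge iff
`(y,ā,x)` is. -/
def IsDual (Γ : AGraph V A) : Prop :=
  (∀ e ∈ Γ.edges, e.1 ∈ Γ.verts ∧ e.2.2 ∈ Γ.verts) ∧
  ∀ x a y, (x, a, y) ∈ Γ.edges ↔ (y, Letter.bar a, x) ∈ Γ.edges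

/-- The link of a vertex: the set of edges into it. -/
def link (Γ : AGraph V A) (x : V) : Finset (V × Letter A × V) :=
  Γ.edges.filter fun e => e.2.2 = x

/-- The hyperlink of a vertex: the set of labels of edges into it. -/
def hl (Γ : AGraph V A) (x : V) : Finset (Letter A) :=
  (Γ.link x).image fun e => e.2.1

/-- A reduced `A`-graph: dual, and two equally-labeled edges into the same vertex coincide. -/
def IsReduced (Γ : AGraph V A) : Prop :=
  Γ.IsDual ∧ ∀ x x' a y, (x, a, y) ∈ Γ.edges → (x', a, y) ∈ Γ.edges → x = x'

/-- A cyclically reduced `A`-graph: reduced, and every vertex has at least two incoming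
edges. -/
def IsCyclRed (Γ : AGraph V A) : Prop :=
  Γ.IsReduced ∧ ∀ x ∈ Γ.verts, 2 ≤ (Γ.link x).card

/-- Rename vertices along a map. -/
def rename (f : V → V) (Γ : AGraph V A) : AGraph V A :=
  ⟨Γ.verts.image f, Γ.edges.image fun e => (f e.1, e.2.1, f e.2.2)⟩

/-- An elementary reduction: identify the sources of two distinct equally-labeled edges
pointing to the same vertex. -/
def ElemRed (Γ Γ' : AGraph V A) : Prop :=
  ∃ x y a z, x ≠ y ∧ (x, a, z) ∈ Γ.edges ∧ (y, a, z) ∈ Γ.edges ∧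
    Γ' = rename (fun w => if w = y then x else w) Γ

/-- `Δ` is the reduction of `Γ`: obtained by a sequence of elementary reductions,
and reduced. -/
def ReducesTo (Γ Δ : AGraph V A) : Prop :=
  Relation.ReflTransGen ElemRed Γ Δ ∧ Δ.IsReduced

/-- An endpoint: a vertex whose hyperlink has at most one element. -/
def IsEndpoint (Γ : AGraph V A) (x : V) : Prop :=
  x ∈ Γ.verts ∧ (Γ.hl x).card ≤ 1

/-- Remove a vertex and all adjacent edges. -/
def removeV (Γ : AGraph V A) (x : V) : AGraph V A :=
  ⟨Γ.verts.erase x, Γ.edges.filter fun e => e.1 ≠ x ∧ e.2.2 ≠ x⟩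

/-- An elementary trimming: removal of an endpoint and its adjacent edges. -/
def ElemTrim (Γ Γ' : AGraph V A) : Prop :=
  ∃ x, Γ.IsEndpoint x ∧ Γ' = Γ.removeV x

/-- `Δ` is the cyclic core of `Γ`: obtained by a sequence of elementary trimmings,
and without endpoints. -/
def CoreOf (Γ Δ : AGraph V A) : Prop :=
  Relation.ReflTransGen ElemTrim Γ Δ ∧ ∀ x, ¬ Δ.IsEndpoint x

/-- The capacity of `Y ⊆ Ã` in the Whitehead hypergraph `W_Γ`: the number of hyperedges
(one per vertex `x` of `Γ`, with image the hyperlink of `x`) meeting both `Y` and its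
complement. -/
def cap (Γ : AGraph V A) (Y : Finset (Letter A)) : ℕ :=
  (Γ.verts.filter fun x => (Γ.hl x ∩ Y).Nonempty ∧ (Γ.hl x \ Y).Nonempty).card

/-- The degree of `v ∈ Ã` in the Whitehead hypergraph `W_Γ`: the number of hyperedges
containing `v`. -/
def deg (Γ : AGraph V A) (v : Letter A) : ℕ :=
  (Γ.verts.filter fun x => v ∈ Γ.hl x).card

end AGraph

/-- The image of a letter under the Whitehead automorphism specified by `(v, Y)`,
as a word: `φ(v) = v`, `φ(v̄) = v̄`, and `φ(a) = v^γ a v^ρ` otherwise. -/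
def wImage {A : Type} [DecidableEq A] (v : Letter A) (Y : Finset (Letter A))
    (a : Letter A) : List (Letter A) :=
  if a = v ∨ a = Letter.bar v then [a]
  else (if Letter.bar a ∈ Y then [Letter.bar v] else []) ++ [a] ++ (if a ∈ Y then [v] else [])

/-- Vertex type for the substituted graph: original vertices plus at most two midpoints
per edge. -/
abbrev SV (V A : Type) := V ⊕ ((V × Letter A × V) × Fin 2)

instance {V A : Type} [DecidableEq V] [DecidableEq A] : DecidableEq (SV V A) :=
  inferInstanceAs (DecidableEq (V ⊕ ((V × Letter A × V) × Fin 2)))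

/-- The path (with its dual edges) replacing the edge `e`, whose label word is `w`
(of length 1, 2 or 3). -/
def pathEdges {V A : Type} [DecidableEq V] [DecidableEq A] (e : V × Letter A × V)
    (w : List (Letter A)) : Finset (SV V A × Letter A × SV V A) :=
  let x : SV V A := Sum.inl e.1
  let y : SV V A := Sum.inl e.2.2
  let m0 : SV V A := Sum.inr (e, 0)
  let m1 : SV V A := Sum.inr (e, 1)
  match w with
  | [c] => {(x, c, y), (y, Letter.bar c, x)}
  | [c1, c2] => {(x, c1, m0), (m0, Letter.bar c1, x), (m0, c2, y), (y, Letter.bar c2, m0)}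
  | [c1, c2, c3] => {(x, c1, m0), (m0, Letter.bar c1, x), (m0, c2, m1), (m1, Letter.bar c2, m0),
      (m1, c3, y), (y, Letter.bar c3, m1)}
  | _ => ∅

/-- The graph obtained from `Γ` by replacing each (positively labeled) edge by a path
labeled by the image of its label under the Whitehead automorphism specified by `(v, Y)`
(together with the dual edges). The Whitehead automorphism acts on a cyclically reduced
graph by this substitution followed by reduction and taking the cyclic core. -/
def whSubst {V A : Type} [DecidableEq V] [DecidableEq A] (v : Letter A)
    (Y : Finset (Letter A)) (Γ : AGraph V A) : AGraph (SV V A) A :=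
  let E := (Γ.edges.filter fun e => e.2.1.2 = true).biUnion
    (fun e => pathEdges e (wImage v Y e.2.1))
  ⟨Γ.verts.image Sum.inl ∪ E.biUnion (fun d => {d.1, d.2.2}), E⟩

/-!
Reduction folds together exactly the vertices of the substituted graph having the same image
under `Whitehead.collapse`: a vertex `x` of `Γ` without outgoing `v`-edge stays alone as the
class `inl x`, and for each `x` whose hyperlink meets `Y`, the sources of all `v`-edges into `x`
(vertices of `Γ` and midpoints of paths) form one class `inr x`. So the reduced graph has
`(|Γ| - deg v) + #{x | hl x ∩ Y ≠ ∅}` vertices. Its endpoints are the classes `inl x` with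
`hl x ⊆ Y`, whose only remaining incoming label is `v`, and removing them creates no new
endpoints, since every other class keeps two incoming labels. As
`#{x | hl x ∩ Y ≠ ∅} = cap Y + #{x | ∅ ≠ hl x ⊆ Y}`, the core has `|Γ| - deg v + cap Y` vertices.
-/

namespace Letter

variable {A : Type}

@[simp]
lemma bar_bar (a : Letter A) : bar (bar a) = a := by
  simp [bar]

lemma bar_ne_self (a : Letter A) : bar a ≠ a := by
  simp [bar, Prod.ext_iff]

lemma bar_injective : Function.Injective (bar : Letter A → Letter A) :=
  Function.LeftInverse.injective bar_bar

@[simp]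
lemma bar_inj {a b : Letter A} : bar a = bar b ↔ a = b :=
  bar_injective.eq_iff

lemma bar_eq_comm {a b : Letter A} : bar a = b ↔ a = bar b := by
  rw [← bar_inj, bar_bar]

lemma snd_or_bar_snd (a : Letter A) : a.2 = true ∨ (bar a).2 = true := by
  cases a with
  | mk _ b => cases b <;> simp [bar]

end Letter

lemma Finset.card_image_eq_card_image_of_ker {α β γ : Type} [DecidableEq β] [DecidableEq γ]
    {s : Finset α} {f : α → β} {g : α → γ}
    (h : ∀ u ∈ s, ∀ w ∈ s, f u = f w ↔ g u = g w) :
    (s.image f).card = (s.image g).card := by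
  have hfst : ((s.image fun u => (f u, g u)).image Prod.fst).card
      = (s.image fun u => (f u, g u)).card := Finset.card_image_of_injOn <| by
    simp only [Set.InjOn, Finset.coe_image, Set.forall_mem_image, Prod.mk.injEq]
    exact fun u hu w hw huw => ⟨huw, (h u hu w hw).1 huw⟩
  have hsnd : ((s.image fun u => (f u, g u)).image Prod.snd).card
      = (s.image fun u => (f u, g u)).card := Finset.card_image_of_injOn <| by
    simp only [Set.InjOn, Finset.coe_image, Set.forall_mem_image, Prod.mk.injEq]
    exact fun u hu w hw huw => ⟨(h u hu w hw).2 huw, huw⟩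
  rw [Finset.image_image] at hfst hsnd
  exact hfst.trans hsnd.symm

lemma Finset.mem_image_iff_mem_image_of_ker {α β γ : Type} [DecidableEq β] [DecidableEq γ]
    {s T : Finset α} {f : α → β} {g : α → γ} (h : ∀ u ∈ s, ∀ w ∈ s, f u = f w ↔ g u = g w)
    (hT : T ⊆ s) {u : α} (hu : u ∈ s) : f u ∈ T.image f ↔ g u ∈ T.image g := by
  simp only [Finset.mem_image]
  exact exists_congr fun t => and_congr_right fun ht => h t (hT ht) u hu

namespace AGraph

variable {V A : Type} {Γ : AGraph V A}

lemma IsDual.mem_edges_comm (h : Γ.IsDual) {x y : V} {a : Letter A} :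
    (x, a, y) ∈ Γ.edges ↔ (y, Letter.bar a, x) ∈ Γ.edges :=
  h.2 x a y

lemma IsDual.src_mem (h : Γ.IsDual) {x y : V} {a : Letter A} (he : (x, a, y) ∈ Γ.edges) :
    x ∈ Γ.verts :=
  (h.1 _ he).1

lemma IsDual.tgt_mem (h : Γ.IsDual) {x y : V} {a : Letter A} (he : (x, a, y) ∈ Γ.edges) :
    y ∈ Γ.verts :=
  (h.1 _ he).2

lemma IsReduced.src_eq (h : Γ.IsReduced) {x x' y : V} {a : Letter A}
    (he : (x, a, y) ∈ Γ.edges) (he' : (x', a, y) ∈ Γ.edges) : x = x' :=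
  h.2 _ _ _ _ he he'

inductive Fold (E : Finset (V × Letter A × V)) : V → V → Prop
  | refl (x : V) : Fold E x x
  | symm {x y : V} : Fold E x y → Fold E y x
  | trans {x y z : V} : Fold E x y → Fold E y z → Fold E x z
  | step {x y z z' : V} (a : Letter A) : (x, a, z) ∈ E → (y, a, z') ∈ E →
      Fold E z z' → Fold E x y

lemma Fold.eq_of_isReduced (hΓ : Γ.IsReduced) {u w : V}
    (h : Fold Γ.edges u w) : u = w := by
  induction h with
  | refl => rfl
  | symm _ ih => exact ih.symm
  | trans _ _ ih₁ ih₂ => exact ih₁.trans ih₂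
  | step a h₁ h₂ _ ih => subst ih; exact hΓ.src_eq h₁ h₂

variable [DecidableEq V]

def removeSet (Γ : AGraph V A) (T : Finset V) : AGraph V A :=
  ⟨Γ.verts \ T, Γ.edges.filter fun e => e.1 ∉ T ∧ e.2.2 ∉ T⟩

lemma removeSet_empty (Γ : AGraph V A) : Γ.removeSet ∅ = Γ := by
  cases Γ
  simp [removeSet]

lemma removeV_removeSet (Γ : AGraph V A) (T : Finset V) (y : V) :
    (Γ.removeSet T).removeV y = Γ.removeSet (insert y T) := by
  simp only [removeSet, removeV, mk.injEq]
  constructor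
  · ext w
    simp only [Finset.mem_erase, Finset.mem_sdiff, Finset.mem_insert]
    tauto
  · ext e
    simp only [Finset.mem_filter, Finset.mem_insert]
    tauto

variable [DecidableEq A]

lemma mem_hl_iff {b : Letter A} {x : V} :
    b ∈ Γ.hl x ↔ ∃ s, (s, b, x) ∈ Γ.edges := by
  simp [hl, link]

lemma IsCyclRed.two_le_card_hl (h : Γ.IsCyclRed) {x : V} (hx : x ∈ Γ.verts) :
    2 ≤ (Γ.hl x).card := by
  have hinj : Set.InjOn (fun e : V × Letter A × V => e.2.1) (Γ.link x) := by
    rintro ⟨s, a, t⟩ he ⟨s', a', t'⟩ he' (rfl : a = a')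
    simp only [link, Finset.coe_filter, Set.mem_ofPred_eq] at he he'
    obtain ⟨he, rfl⟩ := he
    obtain ⟨he', rfl⟩ := he'
    rw [h.1.src_eq he he']
  rw [hl, Finset.card_image_of_injOn hinj]
  exact h.2 x hx

lemma IsCyclRed.exists_mem_hl_ne (h : Γ.IsCyclRed) {x : V} (hx : x ∈ Γ.verts)
    (b : Letter A) :
    ∃ a ∈ Γ.hl x, a ≠ b := by
  obtain ⟨a₁, h₁, a₂, h₂, hne⟩ := Finset.one_lt_card.mp (h.two_le_card_hl hx)
  by_cases hb : a₁ = b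
  · exact ⟨a₂, h₂, fun h => hne (hb.trans h.symm)⟩
  · exact ⟨a₁, h₁, hb⟩

lemma IsReduced.deg_eq_card_filter (h : Γ.IsReduced) (a : Letter A) :
    Γ.deg a = (Γ.edges.filter (·.2.1 = a)).card := by
  have himage : Γ.verts.filter (a ∈ Γ.hl ·) = (Γ.edges.filter (·.2.1 = a)).image (·.2.2) := by
    ext x
    simp only [Finset.mem_filter, Finset.mem_image, mem_hl_iff]
    constructor
    · rintro ⟨-, s, hs⟩
      exact ⟨(s, a, x), ⟨hs, rfl⟩, rfl⟩
    · rintro ⟨⟨s, _, x⟩, ⟨hs, rfl⟩, rfl⟩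
      exact ⟨h.1.tgt_mem hs, s, hs⟩
  rw [deg, himage, Finset.card_image_of_injOn]
  rintro ⟨s, _, x⟩ hs ⟨s', _, x'⟩ hs' (rfl : x = x')
  simp only [Finset.coe_filter, Set.mem_ofPred_eq] at hs hs'
  obtain ⟨hs, rfl⟩ := hs
  obtain ⟨hs', rfl⟩ := hs'
  rw [h.src_eq hs hs']

lemma IsReduced.deg_bar (h : Γ.IsReduced) (a : Letter A) :
    Γ.deg (Letter.bar a) = Γ.deg a := by
  let rev : V × Letter A × V → V × Letter A × V := fun e => (e.2.2, Letter.bar e.2.1, e.1)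
  have hrev : Function.Injective rev := by
    rintro ⟨x, b, y⟩ ⟨x', b', y'⟩ heq
    simp only [rev, Prod.mk.injEq, Letter.bar_inj] at heq
    simp [heq]
  have himage :
      (Γ.edges.filter (·.2.1 = a)).image rev = Γ.edges.filter (·.2.1 = Letter.bar a) := by
    ext ⟨x, b, y⟩
    simp only [Finset.mem_image, Finset.mem_filter, rev]
    constructor
    · rintro ⟨⟨y', c, x'⟩, ⟨he, rfl⟩, heq⟩
      simp only [Prod.mk.injEq] at heq
      obtain ⟨rfl, rfl, rfl⟩ := heq
      exact ⟨h.1.mem_edges_comm.1 he, rfl⟩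
    · rintro ⟨he, rfl⟩
      exact ⟨(y, a, x), ⟨by simpa using h.1.mem_edges_comm.1 he, rfl⟩, rfl⟩
  rw [h.deg_eq_card_filter, h.deg_eq_card_filter, ← himage, Finset.card_image_of_injective _ hrev]

lemma Fold.rename (f : V → V) {u w : V} (h : Fold Γ.edges u w) :
    Fold (Γ.rename f).edges (f u) (f w) := by
  induction h with
  | refl x => exact .refl _
  | symm _ ih => exact .symm ih
  | trans _ _ ih₁ ih₂ => exact .trans ih₁ ih₂
  | step a h₁ h₂ _ ih =>
      exact .step a (Finset.mem_image_of_mem _ h₁) (Finset.mem_image_of_mem _ h₂) ih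

/-- The second conjunct, that distinct folded vertices lie in the range of `f`, makes the
induction go through. -/
lemma Fold.of_rename {f : V → V}
    (hf : ∀ p q, f p = f q → Fold Γ.edges p q) {a b : V}
    (h : Fold (Γ.rename f).edges a b) :
    (∀ u w, f u = a → f w = b → Fold Γ.edges u w) ∧
      (a = b ∨ ((∃ u, f u = a) ∧ ∃ w, f w = b)) := by
  induction h with
  | refl x => exact ⟨fun u w hu hw => hf u w (hu.trans hw.symm), Or.inl rfl⟩
  | symm _ ih =>
      refine ⟨fun u w hu hw => (ih.1 w u hw hu).symm, ?_⟩
      rcases ih.2 with h | ⟨h₁, h₂⟩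
      · exact Or.inl h.symm
      · exact Or.inr ⟨h₂, h₁⟩
  | trans _ _ ih₁ ih₂ =>
      rcases ih₁.2 with rfl | ⟨ha, w', hw'⟩
      · exact ih₂
      rcases ih₂.2 with rfl | ⟨_, hb⟩
      · exact ih₁
      exact ⟨fun u w hu hw => (ih₁.1 u w' hu hw').trans (ih₂.1 w' w hw' hw), Or.inr ⟨ha, hb⟩⟩
  | step c h₁ h₂ _ ih =>
      obtain ⟨⟨u₁, c₁, t₁⟩, he₁, heq₁⟩ := Finset.mem_image.mp h₁
      obtain ⟨⟨u₂, c₂, t₂⟩, he₂, heq₂⟩ := Finset.mem_image.mp h₂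
      simp only [Prod.mk.injEq] at heq₁ heq₂
      obtain ⟨hu₁, rfl, ht₁⟩ := heq₁
      obtain ⟨hu₂, rfl, ht₂⟩ := heq₂
      have hfold : Fold Γ.edges u₁ u₂ := .step _ he₁ he₂ (ih.1 t₁ t₂ ht₁ ht₂)
      refine ⟨fun u w hu hw => ?_, Or.inr ⟨⟨u₁, hu₁⟩, ⟨u₂, hu₂⟩⟩⟩
      exact ((hf u u₁ (hu.trans hu₁.symm)).trans hfold).trans (hf u₂ w (hu₂.trans hw.symm))

lemma rename_id (Γ : AGraph V A) : Γ.rename id = Γ := by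
  cases Γ
  simp [rename]

lemma rename_rename (f g : V → V) (Γ : AGraph V A) :
    (Γ.rename f).rename g = Γ.rename (g ∘ f) := by
  simp only [rename, Finset.image_image]
  rfl

lemma exists_rename_of_reflTransGen_elemRed {Δ : AGraph V A}
    (h : Relation.ReflTransGen ElemRed Γ Δ) :
    ∃ F : V → V, Δ = Γ.rename F ∧ ∀ p q, F p = F q → Fold Γ.edges p q := by
  induction h with
  | refl => exact ⟨id, (rename_id Γ).symm, fun p q (h : p = q) => h ▸ .refl _⟩
  | tail _ hstep ih =>
      obtain ⟨F, rfl, hF⟩ := ih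
      obtain ⟨x, y, a, z, -, h₁, h₂, rfl⟩ := hstep
      refine ⟨(fun w => if w = y then x else w) ∘ F, rename_rename _ _ Γ, fun p q hpq => ?_⟩
      have hxy := (Fold.of_rename hF (Fold.step a h₁ h₂ (.refl z))).1
      simp only [Function.comp_apply] at hpq
      split_ifs at hpq with hp hq hq
      · exact hF p q (hp.trans hq.symm)
      · exact (hxy q p hpq.symm hp).symm
      · exact hxy p q hpq hq
      · exact hF p q hpq

lemma ReducesTo.exists_rename {Δ : AGraph V A} (h : Γ.ReducesTo Δ) :
    ∃ F : V → V, Δ = Γ.rename F ∧ ∀ u w, F u = F w ↔ Fold Γ.edges u w := by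
  obtain ⟨F, rfl, hF⟩ := exists_rename_of_reflTransGen_elemRed h.1
  exact ⟨F, rfl, fun u w => ⟨hF u w, fun hfold => (hfold.rename F).eq_of_isReduced h.2⟩⟩

lemma CoreOf.card_add_card {Δ : AGraph V A} (hcore : Γ.CoreOf Δ) (S : Finset V)
    (hS : S ⊆ Γ.verts) (hend : ∀ T ⊆ S, ∀ w, (Γ.removeSet T).IsEndpoint w ↔ w ∈ S \ T) :
    Δ.verts.card + S.card = Γ.verts.card := by
  suffices h : ∀ Γ', Relation.ReflTransGen ElemTrim Γ' Δ →
      ∀ T ⊆ S, Γ' = Γ.removeSet T → Δ = Γ.removeSet S by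
    rw [h Γ hcore.1 ∅ (Finset.empty_subset S) (removeSet_empty Γ).symm]
    exact Finset.card_sdiff_add_card_eq_card hS
  intro Γ' htrim
  induction htrim using Relation.ReflTransGen.head_induction_on with
  | refl =>
      rintro T hT rfl
      suffices hST : S ⊆ T by rw [Finset.Subset.antisymm hT hST]
      intro w hw
      by_contra hwT
      exact hcore.2 w ((hend T hT w).2 (Finset.mem_sdiff.mpr ⟨hw, hwT⟩))
  | head hstep _ ih =>
      rintro T hT rfl
      obtain ⟨y, hy, rfl⟩ := hstep
      have hyS := Finset.mem_sdiff.mp ((hend T hT y).1 hy)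
      exact ih (insert y T) (Finset.insert_subset hyS.1 hT) (removeV_removeSet Γ T y)

lemma mem_hl_removeSet_rename_iff {X : Type} [DecidableEq X]
    (hΓ : ∀ e ∈ Γ.edges, e.1 ∈ Γ.verts ∧ e.2.2 ∈ Γ.verts) {F : V → V} {c : V → X}
    (hker : ∀ u ∈ Γ.verts, ∀ w ∈ Γ.verts, F u = F w ↔ c u = c w)
    {T : Finset V} (hT : T ⊆ Γ.verts) {u : V} (hu : u ∈ Γ.verts) {b : Letter A} :
    b ∈ ((Γ.rename F).removeSet (T.image F)).hl (F u) ↔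
      ∃ p q, (p, b, q) ∈ Γ.edges ∧ c q = c u ∧ c p ∉ T.image c ∧ c q ∉ T.image c := by
  have hmem : ∀ p ∈ Γ.verts, F p ∈ T.image F ↔ c p ∈ T.image c := fun p hp =>
    Finset.mem_image_iff_mem_image_of_ker hker hT hp
  simp only [mem_hl_iff, removeSet, rename, Finset.mem_filter]
  constructor
  · rintro ⟨s, hedge, hFp, hFq⟩
    obtain ⟨⟨p, b', q⟩, he, heq⟩ := Finset.mem_image.mp hedge
    simp only [Prod.mk.injEq] at heq
    obtain ⟨rfl, rfl, hqu⟩ := heq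
    obtain ⟨hp, hq⟩ := hΓ _ he
    exact ⟨p, q, he, (hker q hq u hu).1 hqu, mt (hmem p hp).2 hFp, mt (hmem q hq).2 (hqu ▸ hFq)⟩
  · rintro ⟨p, q, he, hqu, hcp, hcq⟩
    obtain ⟨hp, hq⟩ := hΓ _ he
    have hFqu : F q = F u := (hker q hq u hu).2 hqu
    refine ⟨F p, Finset.mem_image.mpr ⟨(p, b, q), he, by rw [hFqu]⟩, ?_, ?_⟩
    · exact mt (hmem p hp).1 hcp
    · rw [← hFqu]
      exact mt (hmem q hq).1 hcq

end AGraph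

namespace Whitehead

open AGraph

section Substitution

variable {V A : Type} [DecidableEq A] (v : Letter A) (Y : Finset (Letter A))

/-- On the path `[v̄] a [v]` replacing `e = (s, a, t)`, where `v̄` is present iff `ā ∈ Y` and
`v` iff `a ∈ Y`, the edge labelled `a` runs from `labelSrc Y e` to `labelTgt Y e`. -/
def labelSrc (e : V × Letter A × V) : SV V A :=
  if Letter.bar e.2.1 ∈ Y then Sum.inr (e, 0) else Sum.inl e.1

def labelTgt (e : V × Letter A × V) : SV V A :=
  if e.2.1 ∈ Y then Sum.inr (e, if Letter.bar e.2.1 ∈ Y then 1 else 0) else Sum.inl e.2.2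

/-- The edges of the path replacing `e` that are oriented along `e`. -/
def IsForwardEdge (e : V × Letter A × V) (d : SV V A × Letter A × SV V A) : Prop :=
  ((e.2.1 = v ∨ e.2.1 = Letter.bar v) ∧ d = (Sum.inl e.1, e.2.1, Sum.inl e.2.2)) ∨
  (e.2.1 ≠ v ∧ e.2.1 ≠ Letter.bar v ∧
    (d = (labelSrc Y e, e.2.1, labelTgt Y e) ∨
     (Letter.bar e.2.1 ∈ Y ∧ d = (Sum.inl e.1, Letter.bar v, labelSrc Y e)) ∨
     (e.2.1 ∈ Y ∧ d = (labelTgt Y e, v, Sum.inl e.2.2))))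

variable {v Y}

lemma IsForwardEdge.endpoint_cases {e : V × Letter A × V} {d : SV V A × Letter A × SV V A}
    (h : IsForwardEdge v Y e d) {u : SV V A} (hu : u = d.1 ∨ u = d.2.2) :
    u = Sum.inl e.1 ∨ u = Sum.inl e.2.2 ∨
      (e.2.1 ≠ v ∧ e.2.1 ≠ Letter.bar v ∧ (u = labelSrc Y e ∨ u = labelTgt Y e)) := by
  rcases h with ⟨-, rfl⟩ | ⟨hv, hv', rfl | ⟨-, rfl⟩ | ⟨-, rfl⟩⟩ <;> rcases hu with rfl | rfl <;>
    simp_all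

variable [DecidableEq V]

lemma mem_pathEdges_wImage_iff {e : V × Letter A × V} {d : SV V A × Letter A × SV V A} :
    d ∈ pathEdges e (wImage v Y e.2.1) ↔
      IsForwardEdge v Y e d ∨ IsForwardEdge v Y e (d.2.2, Letter.bar d.2.1, d.1) := by
  obtain ⟨s, a, t⟩ := e
  obtain ⟨p, b, q⟩ := d
  by_cases hv : a = v ∨ a = Letter.bar v
  · have hw : wImage v Y a = [a] := by simp [wImage, hv]
    simp only [IsForwardEdge, hw, pathEdges, Finset.mem_insert, Finset.mem_singleton,
      Prod.mk.injEq]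
    rcases hv with rfl | rfl <;> simp [Letter.bar_ne_self] <;>
      constructor <;> rintro (⟨rfl, rfl, rfl⟩ | ⟨rfl, rfl, rfl⟩) <;> simp
  · push Not at hv
    obtain ⟨hav, hav'⟩ := hv
    have hw : wImage v Y a = (if Letter.bar a ∈ Y then [Letter.bar v] else []) ++ [a] ++
        (if a ∈ Y then [v] else []) := by simp [wImage, hav, hav']
    rw [hw]
    by_cases h₁ : Letter.bar a ∈ Y <;> by_cases h₂ : a ∈ Y <;>
      simp [h₁, h₂, hav, hav', pathEdges, IsForwardEdge, labelSrc, labelTgt,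
        Letter.bar_eq_comm] <;>
      aesop

variable {Γ : AGraph V A}

lemma mem_whSubst_edges_iff {d : SV V A × Letter A × SV V A} :
    d ∈ (whSubst v Y Γ).edges ↔ ∃ e ∈ Γ.edges, e.2.1.2 = true ∧
      (IsForwardEdge v Y e d ∨ IsForwardEdge v Y e (d.2.2, Letter.bar d.2.1, d.1)) := by
  simp only [whSubst, Finset.mem_biUnion, Finset.mem_filter, mem_pathEdges_wImage_iff, and_assoc]

lemma IsForwardEdge.mem_whSubst {e : V × Letter A × V} {d : SV V A × Letter A × SV V A}
    (he : e ∈ Γ.edges) (hpos : e.2.1.2 = true) (h : IsForwardEdge v Y e d) :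
    d ∈ (whSubst v Y Γ).edges :=
  mem_whSubst_edges_iff.mpr ⟨e, he, hpos, Or.inl h⟩

lemma IsForwardEdge.reverse_mem_whSubst {e : V × Letter A × V} {p q : SV V A} {b : Letter A}
    (he : e ∈ Γ.edges) (hpos : e.2.1.2 = true) (h : IsForwardEdge v Y e (p, b, q)) :
    (q, Letter.bar b, p) ∈ (whSubst v Y Γ).edges :=
  mem_whSubst_edges_iff.mpr ⟨e, he, hpos, Or.inr (by simpa using h)⟩

lemma reverse_mem_whSubst_edges {p q : SV V A} {b : Letter A}
    (h : (p, b, q) ∈ (whSubst v Y Γ).edges) : (q, Letter.bar b, p) ∈ (whSubst v Y Γ).edges := by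
  obtain ⟨e, he, hpos, h⟩ := mem_whSubst_edges_iff.mp h
  exact mem_whSubst_edges_iff.mpr ⟨e, he, hpos, by simpa [or_comm] using h⟩

lemma mem_whSubst_verts_iff {u : SV V A} :
    u ∈ (whSubst v Y Γ).verts ↔
      (∃ z ∈ Γ.verts, u = Sum.inl z) ∨ ∃ d ∈ (whSubst v Y Γ).edges, u = d.1 ∨ u = d.2.2 := by
  simp only [whSubst, Finset.mem_union, Finset.mem_image, Finset.mem_biUnion, Finset.mem_insert,
    Finset.mem_singleton, eq_comm]

end Substitution

variable {V A : Type} [DecidableEq V] [DecidableEq A] {Γ : AGraph V A} {v : Letter A}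
  {Y : Finset (Letter A)} {T₀ : Finset V} {F : SV V A → SV V A}

variable (Γ v Y) in
/-- Reduction of `whSubst v Y Γ` identifies exactly the vertices with the same image here
(`collapse_eq_iff_fold`): a vertex `z` of `Γ` with an edge `z -v→ x` (i.e. with `v̄ ∈ hl z`)
goes to the class `inr x`, and so does every midpoint whose outgoing `v`-edge ends at `x`. -/
noncomputable def collapse : SV V A → V ⊕ V
  | Sum.inl z =>
      if h : Letter.bar v ∈ Γ.hl z then Sum.inr (mem_hl_iff.mp h).choose else Sum.inl z
  | Sum.inr (e, k) => if k = 0 ∧ Letter.bar e.2.1 ∈ Y then Sum.inr e.1 else Sum.inr e.2.2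

variable (Γ v Y) in
/-- The class in which the letter `a` of the path replacing an `a`-edge into `t` ends. -/
noncomputable def entry (t : V) (a : Letter A) : V ⊕ V :=
  if a ∈ Y then Sum.inr t else collapse Γ v Y (Sum.inl t)

variable (Γ v Y) in
/-- The edges of the image of `whSubst v Y Γ` under `collapse`. -/
def IsQuotEdge (P : V ⊕ V) (b : Letter A) (Q : V ⊕ V) : Prop :=
  (∃ s t, (s, b, t) ∈ Γ.edges ∧ b ≠ v ∧ b ≠ Letter.bar v ∧
      P = entry Γ v Y s (Letter.bar b) ∧ Q = entry Γ v Y t b) ∨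
  (b = v ∧ ∃ t, P = Sum.inr t ∧ Q = collapse Γ v Y (Sum.inl t)) ∨
  (b = Letter.bar v ∧ ∃ t, P = collapse Γ v Y (Sum.inl t) ∧ Q = Sum.inr t)

lemma collapse_inl_of_mem (hΓ : Γ.IsReduced) {z x : V} (h : (z, v, x) ∈ Γ.edges) :
    collapse Γ v Y (Sum.inl z) = Sum.inr x := by
  have hz : Letter.bar v ∈ Γ.hl z := mem_hl_iff.mpr ⟨x, hΓ.1.mem_edges_comm.1 h⟩
  simp only [collapse, dif_pos hz]
  exact congrArg _ (hΓ.src_eq (mem_hl_iff.mp hz).choose_spec (hΓ.1.mem_edges_comm.1 h))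

lemma collapse_inl_of_notMem {z : V} (h : Letter.bar v ∉ Γ.hl z) :
    collapse Γ v Y (Sum.inl z) = Sum.inl z := by
  simp [collapse, h]

lemma collapse_inl_cases (hΓ : Γ.IsReduced) (z : V) :
    (Letter.bar v ∉ Γ.hl z ∧ collapse Γ v Y (Sum.inl z) = Sum.inl z) ∨
      ∃ x, (z, v, x) ∈ Γ.edges ∧ collapse Γ v Y (Sum.inl z) = Sum.inr x := by
  by_cases hz : Letter.bar v ∈ Γ.hl z
  · obtain ⟨x, hx⟩ := mem_hl_iff.mp hz
    have hx : (z, v, x) ∈ Γ.edges := by simpa using hΓ.1.mem_edges_comm.1 hx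
    exact Or.inr ⟨x, hx, collapse_inl_of_mem hΓ hx⟩
  · exact Or.inl ⟨hz, collapse_inl_of_notMem hz⟩

lemma collapse_inl_injective (hΓ : Γ.IsReduced) :
    Function.Injective fun z => collapse Γ v Y (Sum.inl z) := by
  intro z z' h
  simp only at h
  rcases collapse_inl_cases (Y := Y) hΓ z with ⟨-, hz⟩ | ⟨x, hx, hz⟩ <;>
    rcases collapse_inl_cases (Y := Y) hΓ z' with ⟨-, hz'⟩ | ⟨x', hx', hz'⟩ <;>
    rw [hz, hz'] at h <;> simp only [Sum.inl.injEq, Sum.inr.injEq, reduceCtorEq] at h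
  · exact h
  · subst h
    exact hΓ.src_eq hx hx'

lemma eq_inl_of_collapse_eq_inl (hΓ : Γ.IsReduced) {u : SV V A} {x : V}
    (h : collapse Γ v Y u = Sum.inl x) : u = Sum.inl x ∧ Letter.bar v ∉ Γ.hl x := by
  rcases u with z | ⟨e, k⟩
  · rcases collapse_inl_cases (Y := Y) hΓ z with ⟨hz, hc⟩ | ⟨x', -, hc⟩ <;>
      rw [hc] at h <;> simp only [Sum.inl.injEq, reduceCtorEq] at h
    subst h
    exact ⟨rfl, hz⟩
  · simp only [collapse] at h
    split_ifs at h

lemma collapse_labelSrc (e : V × Letter A × V) :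
    collapse Γ v Y (labelSrc Y e) = entry Γ v Y e.1 (Letter.bar e.2.1) := by
  unfold labelSrc entry
  split_ifs <;> simp_all [collapse]

lemma collapse_labelTgt (e : V × Letter A × V) :
    collapse Γ v Y (labelTgt Y e) = entry Γ v Y e.2.2 e.2.1 := by
  unfold labelTgt entry
  split_ifs <;> simp_all [collapse]

lemma entry_injective (hΓ : Γ.IsReduced) (a : Letter A) :
    Function.Injective fun t => entry Γ v Y t a := by
  intro t t' h
  simp only [entry] at h
  split_ifs at h
  · exact Sum.inr_injective h
  · exact collapse_inl_injective hΓ h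

lemma IsQuotEdge.reverse (hΓ : Γ.IsDual) {P Q : V ⊕ V} {b : Letter A}
    (h : IsQuotEdge Γ v Y P b Q) : IsQuotEdge Γ v Y Q (Letter.bar b) P := by
  rcases h with ⟨s, t, he, hbv, hbv', rfl, rfl⟩ | ⟨rfl, t, rfl, rfl⟩ | ⟨rfl, t, rfl, rfl⟩
  · refine Or.inl ⟨t, s, hΓ.mem_edges_comm.1 he, ?_, ?_, by rw [Letter.bar_bar], rfl⟩
    · rwa [Ne, Letter.bar_eq_comm]
    · rwa [Ne, Letter.bar_inj]
  · exact Or.inr (Or.inr ⟨rfl, t, rfl, rfl⟩)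
  · exact Or.inr (Or.inl ⟨Letter.bar_bar v, t, rfl, rfl⟩)

/-- The image of `whSubst v Y Γ` under `collapse` is reduced. -/
lemma IsQuotEdge.src_eq (hΓ : Γ.IsReduced) {P P' Q : V ⊕ V} {b : Letter A}
    (h : IsQuotEdge Γ v Y P b Q) (h' : IsQuotEdge Γ v Y P' b Q) : P = P' := by
  rcases h with ⟨s, t, he, hbv, hbv', rfl, rfl⟩ | ⟨rfl, t, rfl, hQ⟩ | ⟨rfl, t, rfl, hQ⟩ <;>
    rcases h' with ⟨s', t', he', hbv₂, hbv₂', rfl, hQ'⟩ | ⟨hb, t', rfl, hQ'⟩ |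
      ⟨hb, t', rfl, hQ'⟩
  · obtain rfl : t = t' := entry_injective hΓ b hQ'
    rw [hΓ.src_eq he he']
  · exact absurd hb hbv
  · exact absurd hb hbv'
  · exact absurd rfl hbv₂
  · rw [collapse_inl_injective hΓ (hQ.symm.trans hQ')]
  · exact absurd hb.symm (Letter.bar_ne_self _)
  · exact absurd rfl hbv₂'
  · exact absurd hb (Letter.bar_ne_self _)
  · rw [Sum.inr_injective (hQ.symm.trans hQ')]

lemma isQuotEdge_of_isForwardEdge (hΓ : Γ.IsReduced) {e : V × Letter A × V}
    (he : e ∈ Γ.edges) {d : SV V A × Letter A × SV V A} (h : IsForwardEdge v Y e d) :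
    IsQuotEdge Γ v Y (collapse Γ v Y d.1) d.2.1 (collapse Γ v Y d.2.2) := by
  obtain ⟨s, a, t⟩ := e
  rcases h with ⟨rfl | rfl, rfl⟩ | ⟨hav, hav', rfl | ⟨ha, rfl⟩ | ⟨ha, rfl⟩⟩
  · exact Or.inr (Or.inl ⟨rfl, t, collapse_inl_of_mem hΓ he, rfl⟩)
  · have he' : (t, v, s) ∈ Γ.edges := by simpa using hΓ.1.mem_edges_comm.1 he
    exact Or.inr (Or.inr ⟨rfl, s, rfl, collapse_inl_of_mem hΓ he'⟩)
  · exact Or.inl ⟨s, t, he, hav, hav', collapse_labelSrc _, collapse_labelTgt _⟩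
  · refine Or.inr (Or.inr ⟨rfl, s, rfl, ?_⟩)
    simp [collapse_labelSrc, entry, ha]
  · refine Or.inr (Or.inl ⟨rfl, t, ?_, rfl⟩)
    simp [collapse_labelTgt, entry, ha]

lemma isQuotEdge_of_mem (hΓ : Γ.IsReduced) {p q : SV V A} {b : Letter A}
    (h : (p, b, q) ∈ (whSubst v Y Γ).edges) :
    IsQuotEdge Γ v Y (collapse Γ v Y p) b (collapse Γ v Y q) := by
  obtain ⟨e, he, -, hfwd | hfwd⟩ := mem_whSubst_edges_iff.mp h
  · exact isQuotEdge_of_isForwardEdge hΓ he hfwd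
  · simpa using (isQuotEdge_of_isForwardEdge hΓ he hfwd).reverse hΓ.1

lemma collapse_eq_of_fold (hΓ : Γ.IsReduced) {u w : SV V A}
    (h : Fold (whSubst v Y Γ).edges u w) : collapse Γ v Y u = collapse Γ v Y w := by
  induction h with
  | refl => rfl
  | symm _ ih => exact ih.symm
  | trans _ _ ih₁ ih₂ => exact ih₁.trans ih₂
  | step a h₁ h₂ _ ih =>
      exact (isQuotEdge_of_mem hΓ h₁).src_eq hΓ (ih ▸ isQuotEdge_of_mem hΓ h₂)

lemma exists_mem_whSubst_of_mem (hΓ : Γ.IsReduced) {s t : V} {a : Letter A}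
    (he : (s, a, t) ∈ Γ.edges) (hav : a ≠ v) (hav' : a ≠ Letter.bar v) :
    ∃ p q, (p, a, q) ∈ (whSubst v Y Γ).edges ∧
      collapse Γ v Y p = entry Γ v Y s (Letter.bar a) ∧ collapse Γ v Y q = entry Γ v Y t a := by
  rcases Letter.snd_or_bar_snd a with hpos | hpos
  · refine ⟨_, _, IsForwardEdge.mem_whSubst he hpos (Or.inr ⟨hav, hav', Or.inl rfl⟩),
      collapse_labelSrc _, collapse_labelTgt _⟩
  · have he' := hΓ.1.mem_edges_comm.1 he
    have hfwd : IsForwardEdge v Y (t, Letter.bar a, s)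
        (labelSrc Y (t, Letter.bar a, s), Letter.bar a, labelTgt Y (t, Letter.bar a, s)) := by
      refine Or.inr ⟨?_, ?_, Or.inl rfl⟩
      · rwa [Ne, Letter.bar_eq_comm]
      · rwa [Ne, Letter.bar_inj]
    refine ⟨_, _, by simpa using IsForwardEdge.reverse_mem_whSubst he' hpos hfwd, ?_, ?_⟩
    · exact collapse_labelTgt _
    · simpa using collapse_labelSrc (v := v) (Γ := Γ) (t, Letter.bar a, s)

lemma inl_mem_whSubst_of_mem (hΓ : Γ.IsReduced) {s t : V} (he : (s, v, t) ∈ Γ.edges) :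
    (Sum.inl s, v, Sum.inl t) ∈ (whSubst v Y Γ).edges := by
  rcases Letter.snd_or_bar_snd v with hpos | hpos
  · exact IsForwardEdge.mem_whSubst he hpos (Or.inl ⟨Or.inl rfl, rfl⟩)
  · simpa using IsForwardEdge.reverse_mem_whSubst (hΓ.1.mem_edges_comm.1 he) hpos
      (Or.inl ⟨Or.inr rfl, rfl⟩)

lemma exists_v_mem_whSubst (hΓ : Γ.IsReduced) (hbarvY : Letter.bar v ∉ Y) {s t : V}
    {a : Letter A} (he : (s, a, t) ∈ Γ.edges) (ha : a ∈ Y) :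
    ∃ p, (p, v, Sum.inl t) ∈ (whSubst v Y Γ).edges ∧ collapse Γ v Y p = Sum.inr t := by
  by_cases hav : a = v
  · subst hav
    exact ⟨_, inl_mem_whSubst_of_mem hΓ he, collapse_inl_of_mem hΓ he⟩
  have hav' : a ≠ Letter.bar v := fun h => hbarvY (h ▸ ha)
  rcases Letter.snd_or_bar_snd a with hpos | hpos
  · refine ⟨_, IsForwardEdge.mem_whSubst he hpos (Or.inr ⟨hav, hav', Or.inr (Or.inr ⟨ha, rfl⟩)⟩),
      by simp [collapse_labelTgt, entry, ha]⟩
  · have hfwd : IsForwardEdge v Y (t, Letter.bar a, s)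
        (Sum.inl t, Letter.bar v, labelSrc Y (t, Letter.bar a, s)) := by
      refine Or.inr ⟨?_, ?_, Or.inr (Or.inl ⟨by simpa using ha, rfl⟩)⟩
      · rwa [Ne, Letter.bar_eq_comm]
      · rwa [Ne, Letter.bar_inj]
    have hrev := IsForwardEdge.reverse_mem_whSubst (hΓ.1.mem_edges_comm.1 he) hpos hfwd
    exact ⟨_, by simpa using hrev, by simp [collapse_labelSrc, entry, ha]⟩

lemma src_mem_whSubst_verts {p q : SV V A} {b : Letter A}
    (h : (p, b, q) ∈ (whSubst v Y Γ).edges) : p ∈ (whSubst v Y Γ).verts :=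
  mem_whSubst_verts_iff.mpr (Or.inr ⟨_, h, Or.inl rfl⟩)

lemma tgt_mem_whSubst_verts {p q : SV V A} {b : Letter A}
    (h : (p, b, q) ∈ (whSubst v Y Γ).edges) : q ∈ (whSubst v Y Γ).verts :=
  src_mem_whSubst_verts (reverse_mem_whSubst_edges h)

lemma inl_mem_whSubst_verts {z : V} (hz : z ∈ Γ.verts) :
    Sum.inl z ∈ (whSubst v Y Γ).verts :=
  mem_whSubst_verts_iff.mpr (Or.inl ⟨z, hz, rfl⟩)

lemma whSubst_verts_cases (hΓ : Γ.IsDual) {u : SV V A} (hu : u ∈ (whSubst v Y Γ).verts) :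
    (∃ z ∈ Γ.verts, u = Sum.inl z) ∨ ∃ e ∈ Γ.edges, e.2.1.2 = true ∧ e.2.1 ≠ v ∧
      e.2.1 ≠ Letter.bar v ∧ (u = labelSrc Y e ∨ u = labelTgt Y e) := by
  rcases mem_whSubst_verts_iff.mp hu with hz | ⟨d, hd, hud⟩
  · exact Or.inl hz
  obtain ⟨e, he, hpos, hfwd⟩ := mem_whSubst_edges_iff.mp hd
  have hcases : u = Sum.inl e.1 ∨ u = Sum.inl e.2.2 ∨
      (e.2.1 ≠ v ∧ e.2.1 ≠ Letter.bar v ∧ (u = labelSrc Y e ∨ u = labelTgt Y e)) := by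
    rcases hfwd with hfwd | hfwd
    · exact IsForwardEdge.endpoint_cases hfwd hud
    · exact IsForwardEdge.endpoint_cases hfwd hud.symm
  rcases hcases with rfl | rfl | ⟨hav, hav', hu⟩
  · exact Or.inl ⟨_, hΓ.src_mem he, rfl⟩
  · exact Or.inl ⟨_, hΓ.tgt_mem he, rfl⟩
  · exact Or.inr ⟨e, he, hpos, hav, hav', hu⟩

lemma inl_mem_whSubst_of_collapse_eq_inr (hΓ : Γ.IsReduced) {z x : V}
    (h : collapse Γ v Y (Sum.inl z) = Sum.inr x) :
    (Sum.inl z, v, Sum.inl x) ∈ (whSubst v Y Γ).edges := by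
  rcases collapse_inl_cases (Y := Y) hΓ z with ⟨-, hc⟩ | ⟨x', he, hc⟩ <;> rw [hc] at h
  · simp at h
  · rw [← Sum.inr_injective h]
    exact inl_mem_whSubst_of_mem hΓ he

lemma mem_whSubst_of_collapse_eq_inr (hΓ : Γ.IsReduced) {u : SV V A}
    (hu : u ∈ (whSubst v Y Γ).verts) {x : V} (h : collapse Γ v Y u = Sum.inr x) :
    (u, v, Sum.inl x) ∈ (whSubst v Y Γ).edges := by
  rcases whSubst_verts_cases hΓ.1 hu with ⟨z, -, rfl⟩ |
    ⟨⟨s, a, t⟩, he, hpos, hav, hav', rfl | rfl⟩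
  · exact inl_mem_whSubst_of_collapse_eq_inr hΓ h
  · by_cases ha : Letter.bar a ∈ Y
    · have hx : s = x := by simpa [labelSrc, collapse, ha] using h
      subst hx
      have hfwd : IsForwardEdge v Y (s, a, t) (Sum.inl s, Letter.bar v, labelSrc Y (s, a, t)) :=
        Or.inr ⟨hav, hav', Or.inr (Or.inl ⟨ha, rfl⟩)⟩
      simpa using IsForwardEdge.reverse_mem_whSubst he hpos hfwd
    · simp only [labelSrc, ha, if_false] at h ⊢
      exact inl_mem_whSubst_of_collapse_eq_inr hΓ h
  · by_cases ha : a ∈ Y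
    · have hx : t = x := by
        simp only [labelTgt, ha, if_true, collapse] at h
        split_ifs at h <;> simp_all
      subst hx
      exact IsForwardEdge.mem_whSubst he hpos (Or.inr ⟨hav, hav', Or.inr (Or.inr ⟨ha, rfl⟩)⟩)
    · simp only [labelTgt, ha, if_false] at h ⊢
      exact inl_mem_whSubst_of_collapse_eq_inr hΓ h

lemma collapse_eq_iff_fold (hΓ : Γ.IsReduced) {u w : SV V A}
    (hu : u ∈ (whSubst v Y Γ).verts) (hw : w ∈ (whSubst v Y Γ).verts) :
    collapse Γ v Y u = collapse Γ v Y w ↔ Fold (whSubst v Y Γ).edges u w := by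
  refine ⟨fun h => ?_, collapse_eq_of_fold hΓ⟩
  rcases hc : collapse Γ v Y u with x | x
  · rw [(eq_inl_of_collapse_eq_inl hΓ hc).1, (eq_inl_of_collapse_eq_inl hΓ (h.symm.trans hc)).1]
    exact .refl _
  · exact .step v (mem_whSubst_of_collapse_eq_inr hΓ hu hc)
      (mem_whSubst_of_collapse_eq_inr hΓ hw (h.symm.trans hc)) (.refl _)

variable (Γ v) in
/-- The vertices without outgoing `v`-edge; the others are absorbed into classes `inr _`. -/
def unabsorbed : Finset V := Γ.verts.filter (Letter.bar v ∉ Γ.hl ·)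

variable (Γ Y) in
def meetsY : Finset V := Γ.verts.filter fun x => (Γ.hl x ∩ Y).Nonempty

variable (Γ Y) in
def insideY : Finset V := Γ.verts.filter fun x => (Γ.hl x ∩ Y).Nonempty ∧ Γ.hl x ⊆ Y

lemma bar_notMem_hl_of_mem_insideY (hbarvY : Letter.bar v ∉ Y) {x : V}
    (hx : x ∈ insideY Γ Y) : Letter.bar v ∉ Γ.hl x :=
  fun h => hbarvY ((Finset.mem_filter.mp hx).2.2 h)

lemma card_unabsorbed_add_deg (hΓ : Γ.IsReduced) :
    (unabsorbed Γ v).card + Γ.deg v = Γ.verts.card := by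
  rw [← hΓ.deg_bar, deg, unabsorbed, add_comm, Finset.card_filter_add_card_filter_not]

lemma card_meetsY : (meetsY Γ Y).card = Γ.cap Y + (insideY Γ Y).card := by
  rw [cap, insideY, ← Finset.card_union_of_disjoint]
  · congr 1
    ext x
    simp only [meetsY, Finset.mem_filter, Finset.mem_union, Finset.sdiff_nonempty]
    tauto
  · rw [Finset.disjoint_filter]
    rintro x - ⟨-, hx⟩ ⟨-, hsub⟩
    exact (Finset.sdiff_nonempty.mp hx) hsub

lemma collapse_inl_mem (hΓ : Γ.IsReduced) (hvY : v ∈ Y) {z : V} (hz : z ∈ Γ.verts) :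
    collapse Γ v Y (Sum.inl z) ∈ (unabsorbed Γ v).image Sum.inl ∪ (meetsY Γ Y).image Sum.inr := by
  simp only [Finset.mem_union, Finset.mem_image, unabsorbed, meetsY, Finset.mem_filter]
  rcases collapse_inl_cases (Y := Y) hΓ z with ⟨hz', hc⟩ | ⟨x, he, hc⟩ <;> rw [hc]
  · exact Or.inl ⟨z, ⟨hz, hz'⟩, rfl⟩
  · exact Or.inr ⟨x, ⟨hΓ.1.tgt_mem he, v, Finset.mem_inter.mpr ⟨mem_hl_iff.mpr ⟨z, he⟩, hvY⟩⟩,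
      rfl⟩

lemma entry_mem (hΓ : Γ.IsReduced) (hvY : v ∈ Y) {s t : V} {a : Letter A}
    (he : (s, a, t) ∈ Γ.edges) :
    entry Γ v Y t a ∈ (unabsorbed Γ v).image Sum.inl ∪ (meetsY Γ Y).image Sum.inr := by
  unfold entry
  split_ifs with ha
  · refine Finset.mem_union_right _ (Finset.mem_image.mpr ⟨t, ?_, rfl⟩)
    exact Finset.mem_filter.mpr
      ⟨hΓ.1.tgt_mem he, a, Finset.mem_inter.mpr ⟨mem_hl_iff.mpr ⟨s, he⟩, ha⟩⟩
  · exact collapse_inl_mem hΓ hvY (hΓ.1.tgt_mem he)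

lemma image_collapse_whSubst_verts (hΓ : Γ.IsReduced) (hvY : v ∈ Y)
    (hbarvY : Letter.bar v ∉ Y) :
    (whSubst v Y Γ).verts.image (collapse Γ v Y) =
      (unabsorbed Γ v).image Sum.inl ∪ (meetsY Γ Y).image Sum.inr := by
  ext P
  constructor
  · rw [Finset.mem_image]
    rintro ⟨u, hu, rfl⟩
    rcases whSubst_verts_cases hΓ.1 hu with ⟨z, hz, rfl⟩ |
      ⟨⟨s, a, t⟩, he, -, -, -, rfl | rfl⟩
    · exact collapse_inl_mem hΓ hvY hz
    · rw [collapse_labelSrc]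
      exact entry_mem hΓ hvY (hΓ.1.mem_edges_comm.1 he)
    · rw [collapse_labelTgt]
      exact entry_mem hΓ hvY he
  · simp only [Finset.mem_union, Finset.mem_image, unabsorbed, meetsY, Finset.mem_filter]
    rintro (⟨x, ⟨hx, hx'⟩, rfl⟩ | ⟨x, ⟨-, a, ha⟩, rfl⟩)
    · exact ⟨Sum.inl x, inl_mem_whSubst_verts hx, collapse_inl_of_notMem hx'⟩
    · obtain ⟨ha, haY⟩ := Finset.mem_inter.mp ha
      obtain ⟨s, he⟩ := mem_hl_iff.mp ha
      obtain ⟨p, hp, hcp⟩ := exists_v_mem_whSubst hΓ hbarvY he haY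
      exact ⟨p, src_mem_whSubst_verts hp, hcp⟩

lemma card_image_collapse_whSubst_verts (hΓ : Γ.IsReduced) (hvY : v ∈ Y)
    (hbarvY : Letter.bar v ∉ Y) :
    ((whSubst v Y Γ).verts.image (collapse Γ v Y)).card =
      (unabsorbed Γ v).card + (meetsY Γ Y).card := by
  rw [image_collapse_whSubst_verts hΓ hvY hbarvY, Finset.card_union_of_disjoint,
    Finset.card_image_of_injective _ Sum.inl_injective,
    Finset.card_image_of_injective _ Sum.inr_injective]
  simp [Finset.disjoint_left]

variable (Γ v Y) in
/-- `b` labels an edge of the reduced graph into the class `P` whose source survives the removal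
of the classes `inl x`, `x ∈ T₀`. -/
def InLink (T₀ : Finset V) (P : V ⊕ V) (b : Letter A) : Prop :=
  ∃ p q, (p, b, q) ∈ (whSubst v Y Γ).edges ∧ collapse Γ v Y q = P ∧
    collapse Γ v Y p ∉ T₀.image Sum.inl

lemma collapse_inl_notMem_image_inl (hΓ : Γ.IsReduced) {t : V} (ht : t ∉ T₀) :
    collapse Γ v Y (Sum.inl t) ∉ T₀.image Sum.inl := by
  simp only [Finset.mem_image, not_exists, not_and]
  intro x hx hxt
  obtain ⟨htx, -⟩ := eq_inl_of_collapse_eq_inl hΓ hxt.symm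
  exact ht (Sum.inl_injective htx ▸ hx)

lemma entry_notMem_image_inl (hΓ : Γ.IsReduced) (hT₀ : T₀ ⊆ insideY Γ Y) {s t : V}
    {b : Letter A} (he : (s, b, t) ∈ Γ.edges) : entry Γ v Y t b ∉ T₀.image Sum.inl := by
  unfold entry
  split_ifs with hb
  · simp
  · refine collapse_inl_notMem_image_inl hΓ fun ht => hb ?_
    exact (Finset.mem_filter.mp (hT₀ ht)).2.2 (mem_hl_iff.mpr ⟨s, he⟩)

lemma inLink_entry (hΓ : Γ.IsReduced) (hT₀ : T₀ ⊆ insideY Γ Y) {s t : V} {b : Letter A}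
    (he : (s, b, t) ∈ Γ.edges) (hbv : b ≠ v) (hbv' : b ≠ Letter.bar v) :
    InLink Γ v Y T₀ (entry Γ v Y t b) b := by
  obtain ⟨p, q, hpq, hp, hq⟩ := exists_mem_whSubst_of_mem (Y := Y) hΓ he hbv hbv'
  exact ⟨p, q, hpq, hq, hp ▸ entry_notMem_image_inl hΓ hT₀ (hΓ.1.mem_edges_comm.1 he)⟩

lemma inLink_v (hΓ : Γ.IsReduced) (hbarvY : Letter.bar v ∉ Y) {s t : V} {a : Letter A}
    (he : (s, a, t) ∈ Γ.edges) (ha : a ∈ Y) :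
    InLink Γ v Y T₀ (collapse Γ v Y (Sum.inl t)) v := by
  obtain ⟨p, hp, hcp⟩ := exists_v_mem_whSubst hΓ hbarvY he ha
  exact ⟨p, _, hp, rfl, by simp [hcp]⟩

lemma inLink_barv (hΓ : Γ.IsReduced) (hbarvY : Letter.bar v ∉ Y) {s t : V} {a : Letter A}
    (he : (s, a, t) ∈ Γ.edges) (ha : a ∈ Y) (ht : t ∉ T₀) :
    InLink Γ v Y T₀ (Sum.inr t) (Letter.bar v) := by
  obtain ⟨p, hp, hcp⟩ := exists_v_mem_whSubst hΓ hbarvY he ha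
  exact ⟨_, p, reverse_mem_whSubst_edges hp, hcp, collapse_inl_notMem_image_inl hΓ ht⟩

lemma eq_v_or_of_inLink_inl (hΓ : Γ.IsReduced) {x : V} {b : Letter A}
    (h : InLink Γ v Y T₀ (Sum.inl x) b) : b = v ∨ (b ∈ Γ.hl x ∧ b ∉ Y) := by
  obtain ⟨p, q, hpq, hq, -⟩ := h
  rcases isQuotEdge_of_mem hΓ hpq with ⟨s, t, he, -, -, -, hQ⟩ | ⟨hb, -⟩ | ⟨-, t, -, hQ⟩
  · rw [hq] at hQ
    unfold entry at hQ
    split_ifs at hQ with hb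
    obtain ⟨htx, -⟩ := eq_inl_of_collapse_eq_inl hΓ hQ.symm
    obtain rfl := Sum.inl_injective htx
    exact Or.inr ⟨mem_hl_iff.mpr ⟨s, he⟩, hb⟩
  · exact Or.inl hb
  · simp [hq] at hQ

lemma inLink_inl_of_mem_hl (hΓ : Γ.IsReduced) (hvY : v ∈ Y) (hT₀ : T₀ ⊆ insideY Γ Y) {x : V}
    (hx : Letter.bar v ∉ Γ.hl x) {b : Letter A} (hb : b ∈ Γ.hl x) (hbY : b ∉ Y) :
    InLink Γ v Y T₀ (Sum.inl x) b := by
  obtain ⟨s, he⟩ := mem_hl_iff.mp hb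
  have hbv : b ≠ v := fun h => hbY (h ▸ hvY)
  have hbv' : b ≠ Letter.bar v := fun h => hx (h ▸ hb)
  simpa [entry, hbY, collapse_inl_of_notMem hx] using inLink_entry hΓ hT₀ he hbv hbv'

lemma inLink_inr_of_mem_hl (hΓ : Γ.IsReduced) (hbarvY : Letter.bar v ∉ Y)
    (hT₀ : T₀ ⊆ insideY Γ Y) {x : V} {a : Letter A} (ha : a ∈ Γ.hl x) (haY : a ∈ Y)
    (hav : a ≠ v) : InLink Γ v Y T₀ (Sum.inr x) a := by
  obtain ⟨s, he⟩ := mem_hl_iff.mp ha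
  have hav' : a ≠ Letter.bar v := fun h => hbarvY (h ▸ haY)
  simpa [entry, haY] using inLink_entry hΓ hT₀ he hav hav'

lemma exists_inLink_of_v_mem (hΓ : Γ.IsCyclRed) (hvY : v ∈ Y) (hbarvY : Letter.bar v ∉ Y)
    (hT₀ : T₀ ⊆ insideY Γ Y) {z x : V} (hzx : (z, v, x) ∈ Γ.edges) :
    ∃ ℓ, InLink Γ v Y T₀ (Sum.inr x) ℓ ∧ ℓ ≠ Letter.bar v ∧ (ℓ ∈ Y → ℓ = v) := by
  have hcz : collapse Γ v Y (Sum.inl z) = Sum.inr x := collapse_inl_of_mem hΓ.1 hzx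
  obtain ⟨b, hb, hbv'⟩ := hΓ.exists_mem_hl_ne (hΓ.1.1.src_mem hzx) (Letter.bar v)
  obtain ⟨s, he⟩ := mem_hl_iff.mp hb
  by_cases hbY : b ∈ Y
  · exact ⟨v, hcz ▸ inLink_v hΓ.1 hbarvY he hbY, (Letter.bar_ne_self v).symm, fun _ => rfl⟩
  · have hbv : b ≠ v := fun h => hbY (h ▸ hvY)
    refine ⟨b, ?_, hbv', fun h => absurd h hbY⟩
    simpa [entry, hbY, hcz] using inLink_entry hΓ.1 hT₀ he hbv hbv'

lemma exists_inLink_ne_of_inl (hΓ : Γ.IsCyclRed) (hvY : v ∈ Y) (hbarvY : Letter.bar v ∉ Y)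
    (hT₀ : T₀ ⊆ insideY Γ Y) {x : V} (hx : x ∈ Γ.verts) (hx' : Letter.bar v ∉ Γ.hl x)
    (hxY : x ∉ insideY Γ Y) :
    ∃ b₁ b₂, b₁ ≠ b₂ ∧ InLink Γ v Y T₀ (Sum.inl x) b₁ ∧ InLink Γ v Y T₀ (Sum.inl x) b₂ := by
  by_cases hmeet : (Γ.hl x ∩ Y).Nonempty
  · obtain ⟨a, ha⟩ := hmeet
    obtain ⟨ha, haY⟩ := Finset.mem_inter.mp ha
    have hnsub : ¬ Γ.hl x ⊆ Y := fun hsub =>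
      hxY (Finset.mem_filter.mpr ⟨hx, ⟨a, Finset.mem_inter.mpr ⟨ha, haY⟩⟩, hsub⟩)
    obtain ⟨b, hb, hbY⟩ := Finset.not_subset.mp hnsub
    obtain ⟨s, he⟩ := mem_hl_iff.mp ha
    refine ⟨v, b, fun h => hbY (h ▸ hvY), ?_, inLink_inl_of_mem_hl hΓ.1 hvY hT₀ hx' hb hbY⟩
    simpa [collapse_inl_of_notMem hx'] using inLink_v (T₀ := T₀) hΓ.1 hbarvY he haY
  · have hY : ∀ b ∈ Γ.hl x, b ∉ Y := fun b hb hbY =>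
      hmeet ⟨b, Finset.mem_inter.mpr ⟨hb, hbY⟩⟩
    obtain ⟨b₁, h₁, b₂, h₂, hne⟩ := Finset.one_lt_card.mp (hΓ.two_le_card_hl hx)
    exact ⟨b₁, b₂, hne, inLink_inl_of_mem_hl hΓ.1 hvY hT₀ hx' h₁ (hY _ h₁),
      inLink_inl_of_mem_hl hΓ.1 hvY hT₀ hx' h₂ (hY _ h₂)⟩

lemma exists_inLink_ne_of_inr (hΓ : Γ.IsCyclRed) (hvY : v ∈ Y) (hbarvY : Letter.bar v ∉ Y)
    (hT₀ : T₀ ⊆ insideY Γ Y) {x : V} (hx : x ∈ Γ.verts) (hxY : (Γ.hl x ∩ Y).Nonempty) :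
    ∃ b₁ b₂, b₁ ≠ b₂ ∧ InLink Γ v Y T₀ (Sum.inr x) b₁ ∧ InLink Γ v Y T₀ (Sum.inr x) b₂ := by
  obtain ⟨a, ha⟩ := hxY
  obtain ⟨ha, haY⟩ := Finset.mem_inter.mp ha
  by_cases hxT : x ∈ T₀
  · have hsub : Γ.hl x ⊆ Y := (Finset.mem_filter.mp (hT₀ hxT)).2.2
    obtain ⟨a₁, h₁, h₁v⟩ := hΓ.exists_mem_hl_ne hx v
    have hl₁ := inLink_inr_of_mem_hl hΓ.1 hbarvY hT₀ h₁ (hsub h₁) h₁v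
    by_cases hv : v ∈ Γ.hl x
    · obtain ⟨z, hzx⟩ := mem_hl_iff.mp hv
      obtain ⟨ℓ, hℓ, -, hℓY⟩ := exists_inLink_of_v_mem hΓ hvY hbarvY hT₀ hzx
      exact ⟨a₁, ℓ, fun h => h₁v (h.trans (hℓY (h ▸ hsub h₁))), hl₁, hℓ⟩
    · obtain ⟨a₂, h₂, h₂ne⟩ := hΓ.exists_mem_hl_ne hx a₁
      exact ⟨a₁, a₂, fun h => h₂ne h.symm, hl₁,
        inLink_inr_of_mem_hl hΓ.1 hbarvY hT₀ h₂ (hsub h₂) fun h => hv (h ▸ h₂)⟩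
  · obtain ⟨s, he⟩ := mem_hl_iff.mp ha
    have hbar := inLink_barv hΓ.1 hbarvY he haY hxT
    by_cases hav : a = v
    · subst hav
      obtain ⟨ℓ, hℓ, hℓv, -⟩ := exists_inLink_of_v_mem hΓ hvY hbarvY hT₀ he
      exact ⟨Letter.bar a, ℓ, fun h => hℓv h.symm, hbar, hℓ⟩
    · exact ⟨Letter.bar v, a, fun h => hbarvY (h ▸ haY), hbar,
        inLink_inr_of_mem_hl hΓ.1 hbarvY hT₀ ha haY hav⟩

variable (Γ v Y) in
def SameFibres (F : SV V A → SV V A) : Prop :=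
  ∀ u ∈ (whSubst v Y Γ).verts, ∀ w ∈ (whSubst v Y Γ).verts,
    F u = F w ↔ collapse Γ v Y u = collapse Γ v Y w

lemma image_inl_subset_whSubst_verts (hT₀ : T₀ ⊆ insideY Γ Y) :
    T₀.image Sum.inl ⊆ (whSubst v Y Γ).verts := by
  intro u hu
  obtain ⟨x, hx, rfl⟩ := Finset.mem_image.mp hu
  exact inl_mem_whSubst_verts (Finset.mem_filter.mp (hT₀ hx)).1

lemma image_collapse_image_inl (hbarvY : Letter.bar v ∉ Y) (hT₀ : T₀ ⊆ insideY Γ Y) :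
    (T₀.image Sum.inl).image (collapse Γ v Y) = T₀.image Sum.inl := by
  rw [Finset.image_image]
  exact Finset.image_congr fun x hx =>
    collapse_inl_of_notMem (bar_notMem_hl_of_mem_insideY hbarvY (hT₀ hx))

lemma mem_hl_removeSet_iff_inLink (hbarvY : Letter.bar v ∉ Y) (hker : SameFibres Γ v Y F)
    (hT₀ : T₀ ⊆ insideY Γ Y) {u : SV V A} (hu : u ∈ (whSubst v Y Γ).verts)
    (hcu : collapse Γ v Y u ∉ T₀.image Sum.inl) {b : Letter A} :
    b ∈ (((whSubst v Y Γ).rename F).removeSet ((T₀.image Sum.inl).image F)).hl (F u) ↔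
      InLink Γ v Y T₀ (collapse Γ v Y u) b := by
  rw [mem_hl_removeSet_rename_iff
    (fun e he => ⟨src_mem_whSubst_verts he, tgt_mem_whSubst_verts he⟩) hker
    (image_inl_subset_whSubst_verts hT₀) hu, image_collapse_image_inl hbarvY hT₀]
  constructor
  · rintro ⟨p, q, he, hq, hp, -⟩
    exact ⟨p, q, he, hq, hp⟩
  · rintro ⟨p, q, he, hq, hp⟩
    exact ⟨p, q, he, hq, hp, hq ▸ hcu⟩

lemma mem_image_image_inl_iff (hbarvY : Letter.bar v ∉ Y) (hker : SameFibres Γ v Y F)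
    (hT₀ : T₀ ⊆ insideY Γ Y) {u : SV V A} (hu : u ∈ (whSubst v Y Γ).verts) :
    F u ∈ (T₀.image Sum.inl).image F ↔ collapse Γ v Y u ∈ T₀.image Sum.inl := by
  rw [Finset.mem_image_iff_mem_image_of_ker hker (image_inl_subset_whSubst_verts hT₀) hu,
    image_collapse_image_inl hbarvY hT₀]

/-- A class `inr x` always keeps two incoming labels, and so does a class `inl x` unless
`hl x ⊆ Y`. -/
lemma mem_of_isEndpoint_removeSet (hΓ : Γ.IsCyclRed) (hvY : v ∈ Y) (hbarvY : Letter.bar v ∉ Y)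
    (hker : SameFibres Γ v Y F) (hT₀ : T₀ ⊆ insideY Γ Y) {w : SV V A}
    (hw : (((whSubst v Y Γ).rename F).removeSet ((T₀.image Sum.inl).image F)).IsEndpoint w) :
    w ∈ ((insideY Γ Y).image Sum.inl).image F \ (T₀.image Sum.inl).image F := by
  obtain ⟨hw, hcard⟩ := hw
  obtain ⟨hw, hwT⟩ := Finset.mem_sdiff.mp hw
  obtain ⟨u, hu, rfl⟩ := Finset.mem_image.mp hw
  have hcu := mt (mem_image_image_inl_iff hbarvY hker hT₀ hu).2 hwT
  have hlink : ¬ ∃ b₁ b₂, b₁ ≠ b₂ ∧ InLink Γ v Y T₀ (collapse Γ v Y u) b₁ ∧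
      InLink Γ v Y T₀ (collapse Γ v Y u) b₂ := by
    rintro ⟨b₁, b₂, hne, h₁, h₂⟩
    have := Finset.one_lt_card.mpr ⟨b₁, (mem_hl_removeSet_iff_inLink hbarvY hker hT₀ hu hcu).2 h₁,
      b₂, (mem_hl_removeSet_iff_inLink hbarvY hker hT₀ hu hcu).2 h₂, hne⟩
    omega
  have hclass := Finset.mem_image_of_mem (collapse Γ v Y) hu
  rw [image_collapse_whSubst_verts hΓ.1 hvY hbarvY, Finset.mem_union] at hclass
  rcases hclass with hP | hP <;> obtain ⟨x, hx, hxu⟩ := Finset.mem_image.mp hP <;>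
    obtain ⟨hxv, hx⟩ := Finset.mem_filter.mp hx
  · by_cases hxY : x ∈ insideY Γ Y
    · refine Finset.mem_sdiff.mpr ⟨Finset.mem_image.mpr ⟨Sum.inl x,
        Finset.mem_image_of_mem _ hxY, (hker _ (inl_mem_whSubst_verts hxv) u hu).2 ?_⟩, hwT⟩
      rw [collapse_inl_of_notMem hx, hxu]
    · exact absurd (hxu ▸ exists_inLink_ne_of_inl hΓ hvY hbarvY hT₀ hxv hx hxY) hlink
  · exact absurd (hxu ▸ exists_inLink_ne_of_inr hΓ hvY hbarvY hT₀ hxv hx) hlink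

lemma isEndpoint_removeSet_of_mem (hΓ : Γ.IsReduced) (hbarvY : Letter.bar v ∉ Y)
    (hker : SameFibres Γ v Y F) (hT₀ : T₀ ⊆ insideY Γ Y) {w : SV V A}
    (hw : w ∈ ((insideY Γ Y).image Sum.inl).image F \ (T₀.image Sum.inl).image F) :
    (((whSubst v Y Γ).rename F).removeSet ((T₀.image Sum.inl).image F)).IsEndpoint w := by
  obtain ⟨hw, hwT⟩ := Finset.mem_sdiff.mp hw
  obtain ⟨_, hu, rfl⟩ := Finset.mem_image.mp hw
  obtain ⟨x, hx, rfl⟩ := Finset.mem_image.mp hu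
  have hxv := inl_mem_whSubst_verts (v := v) (Y := Y) (Finset.mem_filter.mp hx).1
  have hc : collapse Γ v Y (Sum.inl x) = Sum.inl x :=
    collapse_inl_of_notMem (bar_notMem_hl_of_mem_insideY hbarvY hx)
  refine ⟨Finset.mem_sdiff.mpr ⟨Finset.mem_image_of_mem _ hxv, hwT⟩, ?_⟩
  have hsub : (((whSubst v Y Γ).rename F).removeSet ((T₀.image Sum.inl).image F)).hl
      (F (Sum.inl x)) ⊆ {v} := by
    intro b hb
    rw [mem_hl_removeSet_iff_inLink hbarvY hker hT₀ hxv
      (mt (mem_image_image_inl_iff hbarvY hker hT₀ hxv).2 hwT), hc] at hb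
    rcases eq_v_or_of_inLink_inl hΓ hb with rfl | ⟨hb, hbY⟩
    · exact Finset.mem_singleton_self _
    · exact absurd ((Finset.mem_filter.mp hx).2.2 hb) hbY
  simpa using Finset.card_le_card hsub

lemma card_core_add_card_insideY (hΓ : Γ.IsCyclRed) (hvY : v ∈ Y) (hbarvY : Letter.bar v ∉ Y)
    (hker : SameFibres Γ v Y F) {Δ : AGraph (SV V A) A}
    (hcore : ((whSubst v Y Γ).rename F).CoreOf Δ) :
    Δ.verts.card + (insideY Γ Y).card = ((whSubst v Y Γ).rename F).verts.card := by
  have hS := image_inl_subset_whSubst_verts (v := v) (subset_refl (insideY Γ Y))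
  have hcard : (((insideY Γ Y).image Sum.inl).image F).card = (insideY Γ Y).card := by
    rw [Finset.card_image_eq_card_image_of_ker fun u hu w hw => hker u (hS hu) w (hS hw),
      image_collapse_image_inl hbarvY subset_rfl,
      Finset.card_image_of_injective _ Sum.inl_injective]
  rw [← hcard]
  refine hcore.card_add_card _ (Finset.image_subset_image hS) fun T hT w => ?_
  obtain ⟨T', hT', rfl⟩ := Finset.subset_image_iff.mp hT
  obtain ⟨T₀, hT₀, rfl⟩ := Finset.subset_image_iff.mp hT'
  exact ⟨mem_of_isEndpoint_removeSet hΓ hvY hbarvY hker hT₀,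
    isEndpoint_removeSet_of_mem hΓ.1 hbarvY hker hT₀⟩

lemma card_rename_whSubst_verts (hΓ : Γ.IsReduced) (hvY : v ∈ Y) (hbarvY : Letter.bar v ∉ Y)
    (hker : SameFibres Γ v Y F) :
    ((whSubst v Y Γ).rename F).verts.card = (unabsorbed Γ v).card + (meetsY Γ Y).card := by
  rw [← card_image_collapse_whSubst_verts hΓ hvY hbarvY]
  exact Finset.card_image_eq_card_image_of_ker hker

end Whitehead

/-- **Gersten's formula.** Let `Γ` be a cyclically reduced `A`-graph, `v ∈ Ã`, `Y` a
`v`-cut of `Ã`, and `φ` the Whitehead automorphism of the second kind specified by `(v, Y)`.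
The graph `φ(Γ)` is obtained from `Γ` by replacing each edge by a path labeled by the image
of its label, reducing, and taking the cyclic core; then
`|φ(Γ)| − |Γ| = cap_{W_Γ}(Y) − deg_{W_Γ}(v)`. -/
theorem whitehead_size_formula {V A : Type} [DecidableEq V] [DecidableEq A]
    (Γ : AGraph V A) (hΓ : Γ.IsCyclRed)
    (v : Letter A) (Y : Finset (Letter A)) (hvY : v ∈ Y) (hbarvY : Letter.bar v ∉ Y)
    (Δ' Δ : AGraph (SV V A) A)
    (hred : AGraph.ReducesTo (whSubst v Y Γ) Δ') (hcore : AGraph.CoreOf Δ' Δ) :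
    (Δ.verts.card : ℤ) - (Γ.verts.card : ℤ)
      = (AGraph.cap Γ Y : ℤ) - (AGraph.deg Γ v : ℤ) := by
  obtain ⟨F, rfl, hF⟩ := hred.exists_rename
  have hker : Whitehead.SameFibres Γ v Y F := fun u hu w hw =>
    (hF u w).trans (Whitehead.collapse_eq_iff_fold hΓ.1 hu hw).symm
  have hΔ := Whitehead.card_core_add_card_insideY hΓ hvY hbarvY hker hcore
  have hΔ' := Whitehead.card_rename_whSubst_verts hΓ.1 hvY hbarvY hker
  have hΓv := Whitehead.card_unabsorbed_add_deg (v := v) hΓ.1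
  have hY := Whitehead.card_meetsY (Γ := Γ) (Y := Y)
  omega
end

section
/- The endomorphism of the free group F(a,b) determined by a ↦ ab, b ↦ b (call it α) and the one determined by a ↦ a, b ↦ ba (call it β) are automorphisms, and for all n, the word length of (β∘α)^n(a) is the sum of the entries of the first column of the matrix [[2,1],[1,1]]^n, and the word length of (β∘α)^n(b) is the sum of the entries of the second column; in particular these lengths grow exponentially in n, at rate ((3+√5)/2)^n. -/
/-!
On positive words `β ∘ α` acts as the substitution `a ↦ aba, b ↦ ba`. Positive words are
reduced, so word length is the number of letters, and the letter counts of the image of a word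
are obtained from its letter counts by the incidence matrix `[[2,1],[1,1]]` of the substitution.
Since this matrix is symmetric, `(φ, 1)` (with `φ` the golden ratio) is a left eigenvector for
the eigenvalue `φ² = (3 + √5)/2`; as `1 ≤ φ`, this pins every column sum of the `n`-th power
between `φ²ⁿ / φ` and `φ · φ²ⁿ`.
-/

namespace FreeGroup

variable {ι : Type*} [DecidableEq ι]

def transvection (i j : ι) (hij : i ≠ j) : FreeGroup ι ≃* FreeGroup ι :=
  MonoidHom.toMulEquiv
    (lift fun k => if k = i then of i * of j else of k)
    (lift fun k => if k = i then of i * (of j)⁻¹ else of k)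
    (by ext k; by_cases hk : k = i <;> simp [hk, hij.symm])
    (by ext k; by_cases hk : k = i <;> simp [hk, hij.symm])

theorem transvection_of_self (i j : ι) (hij : i ≠ j) :
    transvection i j hij (of i) = of i * of j := by
  simp [transvection]

theorem transvection_of_of_ne {i k : ι} (j : ι) (hij : i ≠ j) (hk : k ≠ i) :
    transvection i j hij (of k) = of k := by
  simp [transvection, hk]

omit [DecidableEq ι] in
theorem prod_map_of_eq_mk (l : List ι) : (l.map of).prod = mk (l.map (·, true)) := by
  induction l with
  | nil => rfl
  | cons x l ih => simp [ih, of, mul_mk]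

theorem norm_prod_map_of (l : List ι) : ((l.map of).prod).norm = l.length := by
  have hred : IsReduced (l.map (·, true)) := by
    simpa [IsReduced, List.isChain_map] using
      (List.pairwise_of_forall (l := l) (R := fun _ _ => True) fun _ _ => trivial).isChain
  rw [norm, prod_map_of_eq_mk, toWord_mk, hred.reduce_eq, List.length_map]

omit [DecidableEq ι] in
theorem lift_prod_map_of (σ : ι → List ι) (l : List ι) :
    lift (fun i => ((σ i).map of).prod) (l.map of).prod = ((l.flatMap σ).map of).prod := by
  simp [map_list_prod, List.flatMap, List.prod_flatten, Function.comp_def]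

omit [DecidableEq ι] in
theorem iterate_lift_of (σ : ι → List ι) (n : ℕ) (i : ι) :
    (lift fun i => ((σ i).map of).prod)^[n] (of i) = (((·.flatMap σ)^[n] [i]).map of).prod := by
  have h : Function.Semiconj (fun l : List ι => (l.map of).prod) (·.flatMap σ)
      (lift fun i => ((σ i).map of).prod) := fun l => (lift_prod_map_of σ l).symm
  simpa using (h.iterate_right n [i]).symm

end FreeGroup

namespace List

open Matrix

variable {ι : Type*} [DecidableEq ι]

def substMatrix (σ : ι → List ι) : Matrix ι ι ℕ := Matrix.of fun j i => (σ i).count j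

variable [Fintype ι]

theorem count_flatMap_eq_mulVec (σ : ι → List ι) (l : List ι) :
    (fun j => (l.flatMap σ).count j) = substMatrix σ *ᵥ fun j => l.count j := by
  ext j
  rw [count_flatMap, Finset.sum_list_map_count, mulVec, dotProduct]
  refine (Finset.sum_subset (Finset.subset_univ _) fun i _ hi => ?_).trans ?_
  · simp [count_eq_zero.2 (by simpa using hi)]
  · simp [substMatrix, mul_comm]

theorem count_iterate_flatMap_eq_mulVec (σ : ι → List ι) (n : ℕ) (l : List ι) :
    (fun j => ((·.flatMap σ)^[n] l).count j) = substMatrix σ ^ n *ᵥ fun j => l.count j := by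
  induction n with
  | zero => simp
  | succ n ih =>
    rw [Function.iterate_succ_apply', count_flatMap_eq_mulVec, ih, mulVec_mulVec, pow_succ']

theorem length_eq_sum_count (l : List ι) : l.length = ∑ j, l.count j := by
  simpa using (Multiset.sum_count_eq_card (s := .univ) (m := (l : Multiset ι)) (by simp)).symm

theorem length_iterate_flatMap_singleton (σ : ι → List ι) (n : ℕ) (i : ι) :
    ((·.flatMap σ)^[n] [i]).length = ∑ j, (substMatrix σ ^ n) j i := by
  have hsingle : (fun j => [i].count j) = Pi.single i 1 := by
    ext j; simp [count_singleton, Pi.single_apply, @eq_comm _ i j]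
  rw [length_eq_sum_count]
  refine Finset.sum_congr rfl fun j _ => ?_
  rw [congrFun (count_iterate_flatMap_eq_mulVec σ n [i]) j, hsingle, mulVec_single_one]
  rfl

end List

section GoldenRatio

open Matrix Real goldenRatio

theorem goldenRatio_sq_eq_three_add_sqrt_five_div_two : φ ^ 2 = (3 + √5) / 2 := by
  rw [goldenRatio_sq, goldenRatio]; ring

theorem goldenRatio_mul_add_pow_apply (n : ℕ) (i : Fin 2) :
    φ * ((!![2, 1; 1, 1] ^ n : Matrix (Fin 2) (Fin 2) ℕ) 0 i : ℝ)
      + ((!![2, 1; 1, 1] ^ n : Matrix (Fin 2) (Fin 2) ℕ) 1 i : ℝ)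
      = (φ ^ 2) ^ n * ![φ, 1] i := by
  induction n with
  | zero => fin_cases i <;> simp
  | succ n ih =>
    rw [pow_succ' (!![2, 1; 1, 1] : Matrix (Fin 2) (Fin 2) ℕ)]
    simp only [mul_apply, Fin.sum_univ_two, of_apply, cons_val', cons_val_zero, cons_val_fin_one,
      cons_val_one, Nat.cast_add, Nat.cast_mul]
    generalize ((!![2, 1; 1, 1] ^ n : Matrix (Fin 2) (Fin 2) ℕ) 0 i : ℝ) = a at ih ⊢
    generalize ((!![2, 1; 1, 1] ^ n : Matrix (Fin 2) (Fin 2) ℕ) 1 i : ℝ) = b at ih ⊢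
    push_cast
    linear_combination φ ^ 2 * ih - ((φ + 1) * a + b) * goldenRatio_sq

theorem pow_apply_zero_add_pow_apply_one_mem_Icc (n : ℕ) (i : Fin 2) :
    (((!![2, 1; 1, 1] ^ n : Matrix (Fin 2) (Fin 2) ℕ) 0 i
      + (!![2, 1; 1, 1] ^ n : Matrix (Fin 2) (Fin 2) ℕ) 1 i : ℕ) : ℝ)
      ∈ Set.Icc ((φ ^ 2) ^ n / φ) (φ * (φ ^ 2) ^ n) := by
  have key := goldenRatio_mul_add_pow_apply n i
  have hw : 1 ≤ ![φ, 1] i ∧ ![φ, 1] i ≤ φ := by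
    fin_cases i <;> simp [one_lt_goldenRatio.le]
  have hΛ : 0 < (φ ^ 2) ^ n := by positivity
  generalize ((!![2, 1; 1, 1] ^ n : Matrix (Fin 2) (Fin 2) ℕ) 0 i) = a at key ⊢
  generalize ((!![2, 1; 1, 1] ^ n : Matrix (Fin 2) (Fin 2) ℕ) 1 i) = b at key ⊢
  have ha : (0 : ℝ) ≤ a := a.cast_nonneg
  have hb : (0 : ℝ) ≤ b := b.cast_nonneg
  have hφ := one_lt_goldenRatio
  push_cast
  constructor
  · rw [div_le_iff₀ goldenRatio_pos]; nlinarith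
  · nlinarith

end GoldenRatio

open FreeGroup

theorem transvection_transvection_eq_lift :
    (fun u => transvection (1 : Fin 2) 0 one_ne_zero (transvection 0 1 zero_ne_one u))
      = lift fun i => ((![[0, 1, 0], [1, 0]] i).map FreeGroup.of).prod := by
  refine funext fun u => DFunLike.congr_fun
    (f := (transvection (1 : Fin 2) 0 one_ne_zero).toMonoidHom.comp
      (transvection 0 1 zero_ne_one).toMonoidHom) (ext_hom _ _ fun i => ?_) u
  fin_cases i <;> simp [transvection_of_self, transvection_of_of_ne]

theorem substMatrix_aba_ba : List.substMatrix ![[0, 1, 0], [1, 0]] = !![2, 1; 1, 1] := by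
  ext i j; fin_cases i <;> fin_cases j <;> rfl

/-- The endomorphisms `α : a ↦ ab, b ↦ b` and `β : a ↦ a, b ↦ ba` of the free group
`F(a,b)` are automorphisms; the word length of `(β∘α)^n(a)` is the sum of the entries of
the first column of `[[2,1],[1,1]]^n`, and that of `(β∘α)^n(b)` is the sum of the entries
of the second column; in particular both grow exponentially in `n`, at rate
`((3+√5)/2)^n`. -/
theorem beta_alpha_iterate_length :
    ∃ α β : FreeGroup (Fin 2) ≃* FreeGroup (Fin 2),
      α (FreeGroup.of 0) = FreeGroup.of 0 * FreeGroup.of 1 ∧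
      α (FreeGroup.of 1) = FreeGroup.of 1 ∧
      β (FreeGroup.of 0) = FreeGroup.of 0 ∧
      β (FreeGroup.of 1) = FreeGroup.of 1 * FreeGroup.of 0 ∧
      (∀ n : ℕ,
        (((fun u => β (α u))^[n] (FreeGroup.of 0)).norm
            = (!![2, 1; 1, 1] ^ n : Matrix (Fin 2) (Fin 2) ℕ) 0 0
              + (!![2, 1; 1, 1] ^ n : Matrix (Fin 2) (Fin 2) ℕ) 1 0) ∧
        (((fun u => β (α u))^[n] (FreeGroup.of 1)).norm
            = (!![2, 1; 1, 1] ^ n : Matrix (Fin 2) (Fin 2) ℕ) 0 1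
              + (!![2, 1; 1, 1] ^ n : Matrix (Fin 2) (Fin 2) ℕ) 1 1)) ∧
      ∃ c C : ℝ, 0 < c ∧ ∀ n : ℕ,
        c * ((3 + Real.sqrt 5) / 2) ^ n
            ≤ (((fun u => β (α u))^[n] (FreeGroup.of 0)).norm : ℝ) ∧
        (((fun u => β (α u))^[n] (FreeGroup.of 0)).norm : ℝ)
            ≤ C * ((3 + Real.sqrt 5) / 2) ^ n ∧
        c * ((3 + Real.sqrt 5) / 2) ^ n
            ≤ (((fun u => β (α u))^[n] (FreeGroup.of 1)).norm : ℝ) ∧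
        (((fun u => β (α u))^[n] (FreeGroup.of 1)).norm : ℝ)
            ≤ C * ((3 + Real.sqrt 5) / 2) ^ n := by
  refine ⟨transvection 0 1 zero_ne_one, transvection 1 0 one_ne_zero,
    transvection_of_self _ _ _, transvection_of_of_ne _ _ one_ne_zero,
    transvection_of_of_ne _ _ zero_ne_one, transvection_of_self _ _ _, ?_⟩
  have hnorm (n : ℕ) (i : Fin 2) :
      ((fun u => transvection 1 0 one_ne_zero (transvection 0 1 zero_ne_one u))^[n] (of i)).norm
        = (!![2, 1; 1, 1] ^ n : Matrix (Fin 2) (Fin 2) ℕ) 0 i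
          + (!![2, 1; 1, 1] ^ n : Matrix (Fin 2) (Fin 2) ℕ) 1 i := by
    rw [transvection_transvection_eq_lift, iterate_lift_of, norm_prod_map_of,
      List.length_iterate_flatMap_singleton, substMatrix_aba_ba, Fin.sum_univ_two]
  refine ⟨fun n => ⟨hnorm n 0, hnorm n 1⟩, Real.goldenRatio⁻¹, Real.goldenRatio,
    inv_pos.2 Real.goldenRatio_pos, fun n => ?_⟩
  obtain ⟨lower₀, upper₀⟩ := pow_apply_zero_add_pow_apply_one_mem_Icc n 0
  obtain ⟨lower₁, upper₁⟩ := pow_apply_zero_add_pow_apply_one_mem_Icc n 1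
  rw [← goldenRatio_sq_eq_three_add_sqrt_five_div_two, hnorm, hnorm, inv_mul_eq_div]
  exact ⟨lower₀, upper₀, lower₁, upper₁⟩
end
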